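/- In the logical space labeled by triples (n1, n2, n3) ∈ (Z/3)^3, the unitary U defined by U|n1,n2,n3⟩ = ω^{−n1·n2·n3·(1−n3)} |n2,n1,n3⟩ with ω = e^{2πi/3} satisfies: conjugating by the shift X₃: n3 ↦ n3+1 produces U X₃ U† = X₃ · D where D is the diagonal gate D|n1,n2,n3⟩ = ω^{2 n1 n2 n3}|n1,n2,n3⟩. -/
import Mathlib


open Complex

noncomputable section

/-- The state space ℂ[(ℤ/3)³]. -/
abbrev V3 := (ZMod 3 × ZMod 3 × ZMod 3) → ℂ

/-- ω = e^{2πi/3}. -/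
noncomputable def ω3 : ℂ := Complex.exp (2 * Real.pi * Complex.I / 3)

/-- Phase ω^k for k ∈ ℤ/3. -/
noncomputable def ph3 (k : ZMod 3) : ℂ := ω3 ^ k.val

/-- The exponent f(n1,n2,n3) = n1·n2·n3·(1−n3). -/
def f3 (n : ZMod 3 × ZMod 3 × ZMod 3) : ZMod 3 :=
  n.1 * n.2.1 * n.2.2 * (1 - n.2.2)

/-- The gate U: U|n1,n2,n3⟩ = ω^{−f(n1,n2,n3)}|n2,n1,n3⟩
(expressed by its action on wavefunctions). -/
noncomputable def Ugate : V3 → V3 :=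
  fun ψ n => ph3 (-(f3 n)) * ψ (n.2.1, n.1, n.2.2)

/-- The adjoint U†: U†|n1,n2,n3⟩ = ω^{f(n1,n2,n3)}|n2,n1,n3⟩. -/
noncomputable def Uadj : V3 → V3 :=
  fun ψ n => ph3 (f3 n) * ψ (n.2.1, n.1, n.2.2)

/-- The shift gate X₃: |n1,n2,n3⟩ ↦ |n1,n2,n3+1⟩. -/
def X3gate : V3 → V3 :=
  fun ψ n => ψ (n.1, n.2.1, n.2.2 - 1)

/-- The diagonal gate D|n1,n2,n3⟩ = ω^{2 n1 n2 n3}|n1,n2,n3⟩. -/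
noncomputable def Dgate : V3 → V3 :=
  fun ψ n => ph3 (2 * n.1 * n.2.1 * n.2.2) * ψ n

lemma ω3_cube : ω3 ^ 3 = 1 := by
  rw [ω3, ← Complex.exp_nat_mul]
  have : ((3 : ℕ) : ℂ) * (2 * Real.pi * Complex.I / 3) = 2 * Real.pi * Complex.I := by ring
  rw [this]
  simpa [mul_comm] using Complex.exp_two_pi_mul_I

lemma ph3_add (a b : ZMod 3) : ph3 (a + b) = ph3 a * ph3 b := by
  have h : (a + b).val = (a.val + b.val) % 3 := ZMod.val_add a b
  rw [ph3, ph3, ph3, h, ← pow_add]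
  conv_rhs => rw [show a.val + b.val = 3 * ((a.val + b.val) / 3) + (a.val + b.val) % 3
    from (Nat.div_add_mod _ 3).symm]
  rw [pow_add, pow_mul, ω3_cube, one_pow, one_mul]

/-- Conjugating X₃ by U yields U X₃ U† = X₃ · D. -/
theorem stmt_8 : Ugate ∘ X3gate ∘ Uadj = X3gate ∘ Dgate := by
  funext ψ n
  obtain ⟨a, b, c⟩ := n
  simp only [Function.comp_apply, Ugate, X3gate, Uadj, Dgate]
  rw [← mul_assoc, ← ph3_add]
  congr 2
  revert a b c
  decide

end
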